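/- arXiv:2603.13225 — 2 statements merged into one kernel-verified Lean document; each statement's English description precedes it below -/
import Mathlib

section
/- For n ≥ 1, the set of points x+yi in Oct_n with x and y both even is in bijection with (and has the same cardinality as) E_{w_{n−2}−1, w_{n−1}−2}, via (x,y) ↦ (x/2, y/2). -/
/-- The sequence `w_{2k} = 3·2^k`, `w_{2k+1} = 4·2^k`. -/
def w (n : ℕ) : ℤ := if n % 2 = 0 then 3 * 2 ^ (n / 2) else 4 * 2 ^ (n / 2)

/-- `E a b` : lattice points with `|x| ≤ a`, `|y| ≤ a`, `|x|+|y| ≤ b`. -/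
noncomputable def E (a b : ℤ) : Finset (ℤ × ℤ) :=
  (Finset.Icc (-a) a ×ˢ Finset.Icc (-a) a).filter fun p => |p.1| + |p.2| ≤ b

noncomputable def Oct (n : ℕ) : Finset (ℤ × ℤ) := E (w n - 2) (w (n + 1) - 3)

noncomputable def S (n : ℕ) : Finset (ℤ × ℤ) := (Oct n).filter fun p => ¬ (2 ∣ p.1 ∧ 2 ∣ p.2)

/-! Even points `(2u, 2v)` of `E a b` are exactly the doubles of the points `(u, v)` of
`E (a / 2) (b / 2)`, since `2t ≤ c ↔ t ≤ c / 2` for floor division. Because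
`w (m + 2) = 2 * w m`, halving the bounds of `Oct n` gives those of `E (w (n-2) - 1) (w (n-1) - 2)`;
for `n = 1` only the box bounds differ (`1` against `2`), and both are dominated by the
diagonal bound `1`. -/

lemma w_add_two (m : ℕ) : w (m + 2) = 2 * w m := by
  unfold w
  rw [show (m + 2) % 2 = m % 2 by omega, show (m + 2) / 2 = m / 2 + 1 by omega]
  split <;> ring

lemma mem_E {a b : ℤ} {p : ℤ × ℤ} :
    p ∈ E a b ↔ |p.1| ≤ a ∧ |p.2| ≤ a ∧ |p.1| + |p.2| ≤ b := by
  simp [E, abs_le, and_assoc]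

lemma E_eq_of_le {a a' b : ℤ} (ha : b ≤ a) (ha' : b ≤ a') : E a b = E a' b := by
  ext p
  simp only [mem_E]
  have := abs_nonneg p.1
  have := abs_nonneg p.2
  constructor <;> rintro ⟨-, -, h⟩ <;> exact ⟨by linarith, by linarith, h⟩

lemma double_mem_E_iff {a b : ℤ} {p : ℤ × ℤ} :
    (2 * p.1, 2 * p.2) ∈ E a b ↔ p ∈ E (a / 2) (b / 2) := by
  simp only [mem_E, abs_mul, abs_two, Int.le_ediv_iff_mul_le two_pos, ← mul_add,
    mul_comm _ (2 : ℤ)]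

lemma bijOn_halve_even_E (a b : ℤ) :
    Set.BijOn (fun p : ℤ × ℤ => (p.1 / 2, p.2 / 2))
      (((E a b).filter fun p : ℤ × ℤ => 2 ∣ p.1 ∧ 2 ∣ p.2) : Set (ℤ × ℤ))
      (E (a / 2) (b / 2) : Set (ℤ × ℤ)) := by
  refine Set.InvOn.bijOn (f' := fun p : ℤ × ℤ => (2 * p.1, 2 * p.2)) ⟨?_, ?_⟩ ?_ ?_
  · rintro ⟨x, y⟩ hp
    obtain ⟨-, ⟨u, rfl⟩, ⟨v, rfl⟩⟩ := Finset.mem_filter.mp hp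
    simp
  · intro p _
    simp
  · rintro ⟨x, y⟩ hp
    obtain ⟨hp, ⟨u, rfl⟩, ⟨v, rfl⟩⟩ := Finset.mem_filter.mp hp
    simpa using double_mem_E_iff.mp hp
  · intro p hp
    exact Finset.mem_filter.mpr
      ⟨double_mem_E_iff.mpr hp, dvd_mul_right 2 _, dvd_mul_right 2 _⟩

lemma E_half_Oct {n : ℕ} (hn : 1 ≤ n) :
    E ((w n - 2) / 2) ((w (n + 1) - 3) / 2) = E (w (n - 2) - 1) (w (n - 1) - 2) := by
  obtain ⟨m, rfl⟩ : ∃ m, n = m + 1 := ⟨n - 1, by omega⟩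
  have hb : (w (m + 2) - 3) / 2 = w m - 2 := by rw [w_add_two]; omega
  rw [Nat.add_sub_cancel, hb]
  cases m with
  | zero => exact E_eq_of_le (by decide) (by decide)
  | succ k =>
    rw [show k + 1 + 1 = k + 2 by rfl, w_add_two, Nat.add_sub_cancel]
    congr 1
    omega

theorem stmt_6 (n : ℕ) (hn : 1 ≤ n) :
    Set.BijOn (fun p : ℤ × ℤ => (p.1 / 2, p.2 / 2))
      (((Oct n).filter fun p : ℤ × ℤ => 2 ∣ p.1 ∧ 2 ∣ p.2) : Set (ℤ × ℤ))
      ((E (w (n - 2) - 1) (w (n - 1) - 2)) : Set (ℤ × ℤ)) ∧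
    ((Oct n).filter fun p : ℤ × ℤ => 2 ∣ p.1 ∧ 2 ∣ p.2).card
      = (E (w (n - 2) - 1) (w (n - 1) - 2)).card := by
  have h := bijOn_halve_even_E (w n - 2) (w (n + 1) - 3)
  rw [E_half_Oct hn] at h
  exact ⟨h, h.finsetCard_eq⟩
end

section
/- For n ≥ 1, |S_n| = 2(w_n − 2) + 3(w_n − 2)² − 6(w_n − w_{n−1})(w_n − w_{n−1} − 1). -/
/-!
Every vertical line `x` meets `E a b` in `2 min(a, b - |x|) + 1` points, so `E a b` is the square
`[-a, a]²` with four corner triangles of `(2a - b)(2a - b + 1) / 2` points removed. The points of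
`Oct n` with both coordinates even are twice the points of the half-size octagon, so `|S_n|` is a
difference of two such counts, and for `n ≥ 1` the widths `w (n - 1), w n, w (n + 1)` are
`4q, 6q, 8q` or `3q, 4q, 6q` with `q` a power of two.
-/

open Finset

def octagonCount (a b : ℤ) : ℤ := (2 * a + 1) ^ 2 - 2 * (2 * a - b) * (2 * a - b + 1)

lemma w_two_mul (k : ℕ) : w (2 * k) = 3 * 2 ^ k := by
  simp [w]

lemma w_two_mul_add_one (k : ℕ) : w (2 * k + 1) = 4 * 2 ^ k := by
  rw [w, if_neg (by omega), show (2 * k + 1) / 2 = k by omega]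

lemma card_filter_product {α β : Type*} (s : Finset α) (t : Finset β) (p : α × β → Prop)
    [DecidablePred p] :
    ((s ×ˢ t).filter p).card = ∑ x ∈ s, (t.filter fun y => p (x, y)).card := by
  simp only [card_filter, sum_product]

lemma Icc_neg_add_one_eq_insert (a : ℤ) (ha : 0 ≤ a) :
    Icc (-(a + 1)) (a + 1) = insert (-(a + 1)) (insert (a + 1) (Icc (-a) a)) := by
  ext x; simp only [mem_Icc, mem_insert]; omega

lemma sum_Icc_max_abs_sub (a c : ℤ) (hc : 0 ≤ c) (hca : c ≤ a) :
    ∑ x ∈ Icc (-a) a, max 0 (|x| - c) = (a - c) * (a - c + 1) := by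
  induction a, hca using Int.leInduction with
  | base =>
    rw [sum_eq_zero fun x hx => ?_]
    · ring
    rw [mem_Icc] at hx
    exact max_eq_left (by rw [sub_nonpos, abs_le]; omega)
  | succ a hca ih =>
    rw [Icc_neg_add_one_eq_insert a (by omega), sum_insert (by simp; omega),
      sum_insert (by simp), ih, abs_neg, abs_of_nonneg (by omega : 0 ≤ a + 1),
      max_eq_right (by omega)]
    ring

lemma card_row (a b x : ℤ) (hab : a ≤ b) (hx : |x| ≤ a) :
    (((Icc (-a) a).filter fun y => |x| + |y| ≤ b).card : ℤ)
      = 2 * a + 1 - 2 * max 0 (|x| - (b - a)) := by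
  have : ((Icc (-a) a).filter fun y => |x| + |y| ≤ b)
      = Icc (-min a (b - |x|)) (min a (b - |x|)) := by
    ext y; simp only [mem_filter, mem_Icc, ← le_sub_iff_add_le', abs_le]; omega
  rw [this, Int.card_Icc]
  have := abs_nonneg x
  omega

lemma card_E (a b : ℤ) (ha : 0 ≤ a) (hab : a ≤ b) (hb : b ≤ 2 * a) :
    ((E a b).card : ℤ) = octagonCount a b := by
  have hrow : ∀ x ∈ Icc (-a) a, (((Icc (-a) a).filter fun y => |x| + |y| ≤ b).card : ℤ)
      = 2 * a + 1 - 2 * max 0 (|x| - (b - a)) := fun x hx =>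
    card_row a b x hab (abs_le.2 (mem_Icc.1 hx))
  rw [E, card_filter_product, Nat.cast_sum, sum_congr rfl hrow, sum_sub_distrib, sum_const,
    ← mul_sum, sum_Icc_max_abs_sub a (b - a) (by omega) (by omega), Int.card_Icc, nsmul_eq_mul,
    Int.toNat_of_nonneg (by omega), octagonCount]
  ring

lemma card_E_filter_even (a b : ℤ) :
    ((E (2 * a) (2 * b + 1)).filter fun p => 2 ∣ p.1 ∧ 2 ∣ p.2).card = (E a b).card := by
  refine card_nbij' (fun p => (p.1 / 2, p.2 / 2)) (fun q => (2 * q.1, 2 * q.2)) ?_ ?_ ?_ ?_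
  all_goals
    intro p hp
    simp only [coe_filter, E, mem_filter, mem_product, mem_Icc, Set.mem_ofPred_eq,
      Int.abs_eq_natAbs, Prod.ext_iff] at hp ⊢
    omega

lemma card_E_filter_not_even (a b : ℤ) (ha : 0 ≤ a) (hab : a ≤ b) (hb : b < 2 * a) :
    (((E (2 * a) (2 * b + 1)).filter fun p => ¬(2 ∣ p.1 ∧ 2 ∣ p.2)).card : ℤ)
      = octagonCount (2 * a) (2 * b + 1) - octagonCount a b := by
  have hsplit := card_filter_add_card_filter_not (s := E (2 * a) (2 * b + 1))
    (p := fun p : ℤ × ℤ => 2 ∣ p.1 ∧ 2 ∣ p.2)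
  rw [card_E_filter_even] at hsplit
  have h1 := card_E (2 * a) (2 * b + 1) (by omega) (by omega) (by omega)
  have h2 := card_E a b ha hab hb.le
  rw [← hsplit] at h1
  push_cast at h1
  linear_combination h1 - h2

lemma S_eq_filter_E (n : ℕ) (a b : ℤ) (ha : w n - 2 = 2 * a) (hb : w (n + 1) - 3 = 2 * b + 1) :
    S n = (E (2 * a) (2 * b + 1)).filter fun p => ¬(2 ∣ p.1 ∧ 2 ∣ p.2) := by
  rw [S, Oct, ha, hb]

theorem stmt_7 (n : ℕ) (hn : 1 ≤ n) :
    ((S n).card : ℤ) = 2 * (w n - 2) + 3 * (w n - 2) ^ 2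
      - 6 * (w n - w (n - 1)) * (w n - w (n - 1) - 1) := by
  have hpos (k : ℕ) : (1 : ℤ) ≤ 2 ^ k := one_le_pow₀ (by norm_num)
  obtain ⟨k, rfl | rfl⟩ := Nat.even_or_odd' n
  · obtain ⟨j, rfl⟩ : ∃ j, k = j + 1 := ⟨k - 1, by omega⟩
    have hw : w (2 * (j + 1)) = 6 * 2 ^ j := by rw [w_two_mul, pow_succ]; ring
    have hw' : w (2 * (j + 1) + 1) = 8 * 2 ^ j := by rw [w_two_mul_add_one, pow_succ]; ring
    rw [S_eq_filter_E _ (3 * 2 ^ j - 1) (4 * 2 ^ j - 2) (by rw [hw]; ring) (by rw [hw']; ring),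
      card_E_filter_not_even _ _ (by linarith [hpos j]) (by linarith [hpos j])
        (by linarith [hpos j]),
      hw, show 2 * (j + 1) - 1 = 2 * j + 1 by omega, w_two_mul_add_one, octagonCount, octagonCount]
    ring
  · have hw : w (2 * k + 1 + 1) = 6 * 2 ^ k := by
      rw [show 2 * k + 1 + 1 = 2 * (k + 1) by ring, w_two_mul, pow_succ]; ring
    rw [S_eq_filter_E _ (2 * 2 ^ k - 1) (3 * 2 ^ k - 2) (by rw [w_two_mul_add_one]; ring)
        (by rw [hw]; ring),
      card_E_filter_not_even _ _ (by linarith [hpos k]) (by linarith [hpos k])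
        (by linarith [hpos k]),
      w_two_mul_add_one, Nat.add_sub_cancel, w_two_mul, octagonCount, octagonCount]
    ring
end
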